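/- In the discrete-time uniprocessor preemptive fixed-priority scheduling model, suppose each task i has best-case execution time B i ≥ 1 and worst-case execution time W i ≥ B i, and let C be any execution-requirement assignment with B i ≤ C(i,k) ≤ W i for every task i and job index k. Let S_B denote the schedule in which every job of task i has requirement B i and S_W the schedule in which every job of task i has requirement W i. Then for every job J_i^k: s_{S_B}(i,k) ≤ s_C(i,k) ≤ s_{S_W}(i,k) and f_{S_B}(i,k) ≤ f_C(i,k) ≤ f_{S_W}(i,k). Hence, under implicit communication (each job reads at its start and writes at its finish), the read-event time of every job lies in [s_{S_B}(i,k), s_{S_W}(i,k)] and its write-event time lies in [f_{S_B}(i,k), f_{S_W}(i,k)] across all such execution-time assignments. -/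
import Mathlib


open scoped BigOperators

/-- Release time of the `k`-th job of task `i`: `r(i,k) = O i + k · T i`. -/
def release {ι : Type} (O T : ι → ℕ) (i : ι) (k : ℕ) : ℕ := O i + k * T i

open Classical in
/-- Service received by job `j` during `[rel, t)` under schedule `σ`: the number of
instants in `[rel, t)` at which `σ` serves `j`. -/
noncomputable def service {ι : Type} (σ : ℕ → Option (ι × ℕ)) (rel : ℕ)
    (j : ι × ℕ) (t : ℕ) : ℕ :=
  ((Finset.Ico rel t).filter (fun u => σ u = some j)).card

/-- Job `j = (i,k)` is pending at time `t`: it is released at or before `t` and has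
received strictly fewer units of service than its requirement during `[r(i,k), t)`. -/
def Pending {ι : Type} (O T : ι → ℕ) (C : ι → ℕ → ℕ) (σ : ℕ → Option (ι × ℕ))
    (j : ι × ℕ) (t : ℕ) : Prop :=
  release O T j.1 j.2 ≤ t ∧ service σ (release O T j.1 j.2) j t < C j.1 j.2

/-- `σ` is the preemptive fixed-priority schedule for requirements `C`: at each instant `t`
it serves nothing if no job is pending, and otherwise serves a pending job of the task of
highest priority among tasks with a pending job, choosing among pending jobs of that task
one with earliest release time. -/
def IsFPSchedule {ι : Type} (π O T : ι → ℕ) (C : ι → ℕ → ℕ)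
    (σ : ℕ → Option (ι × ℕ)) : Prop :=
  ∀ t : ℕ,
    ((¬ ∃ j, Pending O T C σ j t) → σ t = none) ∧
    ((∃ j, Pending O T C σ j t) →
      ∃ j, σ t = some j ∧ Pending O T C σ j t ∧
        (∀ j', Pending O T C σ j' t → π j'.1 ≤ π j.1) ∧
        (∀ k' : ℕ, Pending O T C σ (j.1, k') t →
          release O T j.1 j.2 ≤ release O T j.1 k'))

/-- Start time of job `j` under schedule `σ`: the first instant at which `j` is served
(`⊤` if `j` is never served). -/
noncomputable def startTime {ι : Type} (σ : ℕ → Option (ι × ℕ)) (j : ι × ℕ) : ℕ∞ :=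
  sInf {t : ℕ∞ | ∃ u : ℕ, t = (u : ℕ∞) ∧ σ u = some j}

/-- Finish time of job `j = (i,k)` under schedule `σ` with requirements `C`: the least `t`
such that `j` has received `C i k` units of service during `[r(i,k), t)` (`⊤` if no such
instant exists). -/
noncomputable def finishTime {ι : Type} (O T : ι → ℕ) (C : ι → ℕ → ℕ)
    (σ : ℕ → Option (ι × ℕ)) (j : ι × ℕ) : ℕ∞ :=
  sInf {t : ℕ∞ | ∃ u : ℕ, t = (u : ℕ∞) ∧
    service σ (release O T j.1 j.2) j u = C j.1 j.2}


section Aux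

open Classical

variable {ι : Type}

lemma service_mono (σ : ℕ → Option (ι × ℕ)) (rel : ℕ) (j : ι × ℕ) {s t : ℕ}
    (h : s ≤ t) : service σ rel j s ≤ service σ rel j t := by
  classical
  apply Finset.card_le_card
  exact Finset.filter_subset_filter _ (Finset.Ico_subset_Ico le_rfl h)

lemma service_succ (σ : ℕ → Option (ι × ℕ)) (rel : ℕ) (j : ι × ℕ) (t : ℕ) :
    service σ rel j (t+1) =
      service σ rel j t + (if rel ≤ t ∧ σ t = some j then 1 else 0) := by
  classical
  by_cases h : rel ≤ t
  · unfold service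
    rw [Finset.card_filter, Finset.card_filter, Finset.sum_Ico_succ_top h]
    by_cases hs : σ t = some j
    · simp [hs, h]
    · simp [hs, h]
  · have h1 : t + 1 ≤ rel := by omega
    unfold service
    rw [Finset.Ico_eq_empty (by omega), Finset.Ico_eq_empty (by omega)]
    simp [h]

lemma served_pending {π O T : ι → ℕ} {C : ι → ℕ → ℕ} {σ : ℕ → Option (ι × ℕ)}
    (hσ : IsFPSchedule π O T C σ) {j : ι × ℕ} {t : ℕ} (h : σ t = some j) :
    Pending O T C σ j t := by
  by_cases hp : ∃ j', Pending O T C σ j' t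
  · obtain ⟨j', hj', hpend, -, -⟩ := (hσ t).2 hp
    rw [h] at hj'
    cases Option.some.inj hj'
    exact hpend
  · have := (hσ t).1 hp
    rw [h] at this
    exact absurd this (by simp)

lemma service_le {π O T : ι → ℕ} {C : ι → ℕ → ℕ} {σ : ℕ → Option (ι × ℕ)}
    (hσ : IsFPSchedule π O T C σ) (j : ι × ℕ) :
    ∀ t, service σ (release O T j.1 j.2) j t ≤ C j.1 j.2 := by
  intro t
  induction t with
  | zero => simp [service]
  | succ t ih =>
    rw [service_succ]
    split_ifs with h
    · have := (served_pending hσ h.2).2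
      omega
    · omega

lemma key_min_le {π O T : ι → ℕ} (hπ : Function.Injective π) (hT : ∀ i, 1 ≤ T i)
    {C1 C2 : ι → ℕ → ℕ} (hle : ∀ i k, C1 i k ≤ C2 i k)
    {σ1 σ2 : ℕ → Option (ι × ℕ)}
    (hσ1 : IsFPSchedule π O T C1 σ1) (hσ2 : IsFPSchedule π O T C2 σ2) :
    ∀ (t : ℕ) (j : ι × ℕ),
      min (service σ2 (release O T j.1 j.2) j t) (C1 j.1 j.2)
        ≤ service σ1 (release O T j.1 j.2) j t := by
  intro t
  induction t with
  | zero => intro j; simp [service]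
  | succ t ih =>
    intro j
    have ihj := ih j
    rw [service_succ, service_succ]
    by_cases h2 : release O T j.1 j.2 ≤ t ∧ σ2 t = some j
    · rw [if_pos h2]
      by_cases hC : C1 j.1 j.2 ≤ service σ2 (release O T j.1 j.2) j t
      · split_ifs <;> omega
      · by_cases hgt : service σ2 (release O T j.1 j.2) j t
            < service σ1 (release O T j.1 j.2) j t
        · split_ifs <;> omega
        · -- equality case: show σ1 serves j at t
          have hs1lt : service σ1 (release O T j.1 j.2) j t < C1 j.1 j.2 := by omega
          have hjpend1 : Pending O T C1 σ1 j t := ⟨h2.1, hs1lt⟩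
          obtain ⟨j1, hj1serve, hj1pend, hj1max, hj1fifo⟩ := (hσ1 t).2 ⟨j, hjpend1⟩
          have hjpend2 : Pending O T C2 σ2 j t :=
            ⟨h2.1, by have := hle j.1 j.2; omega⟩
          obtain ⟨j2, hj2serve, hj2pend, hj2max, hj2fifo⟩ := (hσ2 t).2 ⟨j, hjpend2⟩
          have hj2eq : j2 = j := by
            rw [h2.2] at hj2serve
            exact (Option.some.inj hj2serve).symm
          rw [hj2eq] at hj2max hj2fifo hj2pend
          -- j1 is pending under σ2 as well
          have ihj1 := ih j1
          have hj1lt : service σ1 (release O T j1.1 j1.2) j1 t < C1 j1.1 j1.2 :=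
            hj1pend.2
          have hj1pend2 : Pending O T C2 σ2 j1 t := by
            refine ⟨hj1pend.1, ?_⟩
            have := hle j1.1 j1.2
            omega
          have hp1 : π j.1 ≤ π j1.1 := hj1max j hjpend1
          have hp2 : π j1.1 ≤ π j.1 := hj2max j1 hj1pend2
          have htask : j1.1 = j.1 := hπ (le_antisymm hp2 hp1)
          have hj1eq : j1 = j := by
            have hf2 : release O T j.1 j.2 ≤ release O T j.1 j1.2 := by
              refine hj2fifo j1.2 ?_
              rw [← htask, Prod.mk.eta]
              exact hj1pend2
            have hf1 : release O T j1.1 j1.2 ≤ release O T j1.1 j.2 := by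
              refine hj1fifo j.2 ?_
              rw [htask, Prod.mk.eta]
              exact hjpend1
            rw [htask] at hf1
            have hrel : release O T j.1 j1.2 = release O T j.1 j.2 :=
              le_antisymm hf1 hf2
            unfold release at hrel
            have hk : j1.2 = j.2 :=
              Nat.eq_of_mul_eq_mul_right (hT j.1) (by omega)
            exact Prod.ext htask hk
          subst hj1eq
          rw [if_pos ⟨h2.1, hj1serve⟩]
          omega
    · rw [if_neg h2]
      split_ifs <;> omega

lemma start_mono {π O T : ι → ℕ} (hπ : Function.Injective π) (hT : ∀ i, 1 ≤ T i)
    {C1 C2 : ι → ℕ → ℕ} (h1 : ∀ i k, 1 ≤ C1 i k) (hle : ∀ i k, C1 i k ≤ C2 i k)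
    {σ1 σ2 : ℕ → Option (ι × ℕ)}
    (hσ1 : IsFPSchedule π O T C1 σ1) (hσ2 : IsFPSchedule π O T C2 σ2)
    (j : ι × ℕ) : startTime σ1 j ≤ startTime σ2 j := by
  classical
  apply le_sInf
  rintro x ⟨u, rfl, hu⟩
  have hpend := served_pending hσ2 hu
  have hrel : release O T j.1 j.2 ≤ u := hpend.1
  have hs2 : 1 ≤ service σ2 (release O T j.1 j.2) j (u+1) := by
    rw [service_succ, if_pos ⟨hrel, hu⟩]; omega
  have hk := key_min_le hπ hT hle hσ1 hσ2 (u+1) j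
  have h1' := h1 j.1 j.2
  have hs1 : 1 ≤ service σ1 (release O T j.1 j.2) j (u+1) := by omega
  have hne : ((Finset.Ico (release O T j.1 j.2) (u+1)).filter
      (fun v => σ1 v = some j)).Nonempty := by
    rw [← Finset.card_pos]
    exact hs1
  obtain ⟨v, hv⟩ := hne
  rw [Finset.mem_filter, Finset.mem_Ico] at hv
  have hmem : (v : ℕ∞) ∈ {t : ℕ∞ | ∃ u : ℕ, t = (u : ℕ∞) ∧ σ1 u = some j} :=
    ⟨v, rfl, hv.2⟩
  calc startTime σ1 j ≤ (v : ℕ∞) := sInf_le hmem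
    _ ≤ (u : ℕ∞) := by exact_mod_cast Nat.le_of_lt_succ hv.1.2

lemma finish_mono {π O T : ι → ℕ} (hπ : Function.Injective π) (hT : ∀ i, 1 ≤ T i)
    {C1 C2 : ι → ℕ → ℕ} (hle : ∀ i k, C1 i k ≤ C2 i k)
    {σ1 σ2 : ℕ → Option (ι × ℕ)}
    (hσ1 : IsFPSchedule π O T C1 σ1) (hσ2 : IsFPSchedule π O T C2 σ2)
    (j : ι × ℕ) : finishTime O T C1 σ1 j ≤ finishTime O T C2 σ2 j := by
  apply le_sInf
  rintro x ⟨u, rfl, hu⟩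
  have hk := key_min_le hπ hT hle hσ1 hσ2 u j
  have hle1 := service_le hσ1 j u
  have hle2 := hle j.1 j.2
  have heq : service σ1 (release O T j.1 j.2) j u = C1 j.1 j.2 := by omega
  exact sInf_le ⟨u, rfl, heq⟩

end Aux

/-- **Boundary of jobs' read and write times.**  If each task `i` has BCET `B i ≥ 1` and
WCET `W i ≥ B i`, and `C` is any execution-requirement assignment with
`B i ≤ C i k ≤ W i`, then under the preemptive fixed-priority schedules `σB` (all jobs
execute with BCET), `σ` (requirements `C`) and `σW` (all jobs execute with WCET), every
job's start time lies in `[s_{S_B}, s_{S_W}]` and its finish time lies in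
`[f_{S_B}, f_{S_W}]`.  Under implicit communication (each job reads at its start and
writes at its finish), these are exactly the bounds on the read-event and write-event
times of every job across all such execution-time assignments. -/
theorem start_finish_bounded_by_bcet_wcet {ι : Type} [Fintype ι]
    (π O T : ι → ℕ) (hπ : Function.Injective π) (hT : ∀ i, 1 ≤ T i)
    (B W : ι → ℕ) (hB : ∀ i, 1 ≤ B i) (hBW : ∀ i, B i ≤ W i)
    (C : ι → ℕ → ℕ) (hCl : ∀ i k, B i ≤ C i k) (hCu : ∀ i k, C i k ≤ W i)
    (σB σ σW : ℕ → Option (ι × ℕ))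
    (hσB : IsFPSchedule π O T (fun i _ => B i) σB)
    (hσ : IsFPSchedule π O T C σ)
    (hσW : IsFPSchedule π O T (fun i _ => W i) σW) :
    ∀ (i : ι) (k : ℕ),
      (startTime σB (i, k) ≤ startTime σ (i, k) ∧
        startTime σ (i, k) ≤ startTime σW (i, k)) ∧
      (finishTime O T (fun i _ => B i) σB (i, k) ≤ finishTime O T C σ (i, k) ∧
        finishTime O T C σ (i, k) ≤ finishTime O T (fun i _ => W i) σW (i, k)) := by
  intro i k
  have h1C : ∀ i k, 1 ≤ C i k := fun i k => le_trans (hB i) (hCl i k)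
  refine ⟨⟨?_, ?_⟩, ?_, ?_⟩
  · exact start_mono hπ hT (fun i _ => hB i) (fun i k => hCl i k) hσB hσ (i, k)
  · exact start_mono hπ hT h1C (fun i k => hCu i k) hσ hσW (i, k)
  · exact finish_mono hπ hT (fun i k => hCl i k) hσB hσ (i, k)
  · exact finish_mono hπ hT (fun i k => hCu i k) hσ hσW (i, k)
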